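/- Every continuous function F : 𝒞 → 𝒞 on Cantor space is (ι'→ι')-continuous: there exists a continuous function G, defined on the set of all ι'-names, such that for every σ ∈ 𝒞 and every ι'-name p of σ, G(p) is an ι'-name of F(σ). -/
import Mathlib


open Filter Topology

/-- An ι'-name of `σ ∈ 𝒞`: a double sequence (identified with an element of `𝒞`
via `Nat.pair`) whose `n`-th row is eventually constant with value `σ n`. -/
def IsIotaPrimeName (p σ : ℕ → Bool) : Prop :=
  ∀ n : ℕ, ∃ M : ℕ, ∀ m : ℕ, M ≤ m → p (Nat.pair n m) = σ n

/-- Every continuous `F : 𝒞 → 𝒞` is (ι'→ι')-continuous. -/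
theorem stmt2 (F : (ℕ → Bool) → (ℕ → Bool)) (hF : Continuous F) :
    ∃ G : (ℕ → Bool) → (ℕ → Bool),
      ContinuousOn G {p | ∃ σ : ℕ → Bool, IsIotaPrimeName p σ} ∧
      ∀ (σ p : ℕ → Bool), IsIotaPrimeName p σ → IsIotaPrimeName (G p) (F σ) := by
  refine ⟨fun p j => F (fun k => p (Nat.pair k (Nat.unpair j).2)) (Nat.unpair j).1, ?_, ?_⟩
  · apply Continuous.continuousOn
    apply continuous_pi
    intro j
    exact (continuous_apply (Nat.unpair j).1).comp
      (hF.comp (continuous_pi fun k => continuous_apply (Nat.pair k (Nat.unpair j).2)))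
  · intro σ p hp n
    have hcol : Tendsto (fun m => fun k => p (Nat.pair k m)) atTop (𝓝 σ) := by
      rw [tendsto_pi_nhds]
      intro k
      obtain ⟨M, hM⟩ := hp k
      apply tendsto_nhds_of_eventually_eq
      filter_upwards [eventually_ge_atTop M] with m hm using hM m hm
    have h2 : Tendsto (fun m => F (fun k => p (Nat.pair k m)) n) atTop (𝓝 (F σ n)) :=
      ((continuous_apply n).tendsto _).comp ((hF.tendsto σ).comp hcol)
    have h3 : ∀ᶠ m in atTop, F (fun k => p (Nat.pair k m)) n = F σ n := by
      have := h2 (IsOpen.mem_nhds (isOpen_discrete {F σ n}) rfl)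
      simpa using this
    obtain ⟨M, hM⟩ := eventually_atTop.mp h3
    exact ⟨M, fun m hm => by simpa [Nat.unpair_pair] using hM m hm⟩
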